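/- arXiv:2508.08753 — 4 statements merged into one kernel-verified Lean document; each statement's English description precedes it below -/
import Mathlib

section
/- Let R be a local ring with maximal ideal M and residue field k = R/M, complete with respect to the M-adic topology, and suppose the residue field k has characteristic zero. Then the natural surjective ring map R → k admits a ring-homomorphism section. -/
/-!
The residue map `π : R → k` is injective on a subring `S` exactly when `S` meets the maximal
ideal only in `0`, and by Zorn's lemma there is a maximal such `S`. The fraction field `E` of `S`
still maps to `R`, since nonzero elements of `S` are units. Every `x : k` lifts to some `a : R`
that is a root of every polynomial over `E` vanishing at `x`: if `x` is transcendental over `E`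
any lift will do, and otherwise `x` is separable over `E` (characteristic zero) and Hensel's lemma
lifts it to a root of its minimal polynomial. Then `π` is still injective on the subring
`E[a] ⊇ S` of `R`, so `a ∈ S` by maximality. Hence `π` restricts to an isomorphism `S ≃ k`,
whose inverse is the section.
-/

open IsLocalRing Polynomial

namespace IsLocalRing

variable {R : Type*} [CommRing R] [IsLocalRing R]

theorem residue_eval₂ {E : Type*} [CommRing E] [Algebra E (ResidueField R)] (φ : E →+* R)
    (hφ : (residue R).comp φ = algebraMap E (ResidueField R)) (a : R) (q : E[X]) :
    residue R (q.eval₂ φ a) = aeval (residue R a) q := by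
  rw [hom_eval₂, hφ, aeval_def]

theorem injOn_residue_range_eval₂ {E : Type*} [CommRing E] [Algebra E (ResidueField R)]
    (φ : E →+* R) (hφ : (residue R).comp φ = algebraMap E (ResidueField R)) {a : R}
    (ha : ∀ q : E[X], aeval (residue R a) q = 0 → q.eval₂ φ a = 0) :
    Set.InjOn (residue R) (eval₂RingHom φ a).range := by
  rintro _ ⟨q₁, rfl⟩ _ ⟨q₂, rfl⟩ h
  rw [← sub_eq_zero, coe_eval₂RingHom, ← eval₂_sub]
  apply ha
  rw [map_sub, ← residue_eval₂ φ hφ, ← residue_eval₂ φ hφ]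
  exact sub_eq_zero.mpr h

theorem injOn_residue_bot [CharZero (ResidueField R)] :
    Set.InjOn (residue R) (⊥ : Subring R) := by
  rw [Subring.coe_bot]
  apply Function.Injective.injOn_range
  simpa only [Function.comp_def, map_intCast] using Int.cast_injective (α := ResidueField R)

theorem injOn_residue_sSup {c : Set (Subring R)} (hne : c.Nonempty)
    (hc : DirectedOn (· ≤ ·) c) (h : ∀ S ∈ c, Set.InjOn (residue R) S) :
    Set.InjOn (residue R) (sSup c : Subring R) := by
  rw [Subring.coe_sSup_of_directedOn hne hc]
  intro x hx y hy
  obtain ⟨S, hS, hx⟩ := Set.mem_iUnion₂.mp hx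
  obtain ⟨T, hT, hy⟩ := Set.mem_iUnion₂.mp hy
  obtain ⟨U, hU, hSU, hTU⟩ := hc S hS T hT
  exact h U hU (hSU hx) (hTU hy)

theorem exists_maximal_injOn_residue [CharZero (ResidueField R)] :
    ∃ S : Subring R, Maximal (fun S : Subring R ↦ Set.InjOn (residue R) S) S := by
  obtain ⟨S, -, hS⟩ := zorn_le_nonempty₀ {S : Subring R | Set.InjOn (residue R) S}
    (fun c hcS hc T hT ↦ ⟨sSup c, injOn_residue_sSup ⟨T, hT⟩ hc.directedOn hcS,
      fun _ ↦ le_sSup⟩) ⊥ injOn_residue_bot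
  exact ⟨S, hS⟩

theorem exists_residue_eq_of_transcendental {E : Type*} [CommRing E]
    [Algebra E (ResidueField R)] (φ : E →+* R) {x : ResidueField R} (hx : Transcendental E x) :
    ∃ a : R, residue R a = x ∧ ∀ q : E[X], aeval x q = 0 → q.eval₂ φ a = 0 := by
  obtain ⟨a, rfl⟩ := residue_surjective x
  refine ⟨a, rfl, fun q hq ↦ ?_⟩
  rw [transcendental_iff.mp hx q hq, eval₂_zero]

theorem exists_residue_eq_of_isSeparable [HenselianRing R (maximalIdeal R)] {E : Type*}
    [Field E] [Algebra E (ResidueField R)] (φ : E →+* R)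
    (hφ : (residue R).comp φ = algebraMap E (ResidueField R)) {x : ResidueField R}
    (hx : IsSeparable E x) :
    ∃ a : R, residue R a = x ∧ ∀ q : E[X], aeval x q = 0 → q.eval₂ φ a = 0 := by
  obtain ⟨a₀, rfl⟩ := residue_surjective x
  set p := minpoly E (residue R a₀)
  have hp : p.Monic := minpoly.monic hx.isIntegral
  have hroot : (p.map φ).eval a₀ ∈ maximalIdeal R := by
    rw [← residue_eq_zero_iff, eval_map, residue_eval₂ φ hφ, minpoly.aeval]
  have hsimple : IsUnit (residue R ((p.map φ).derivative.eval a₀)) := by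
    rw [isUnit_iff_ne_zero, derivative_map, eval_map, residue_eval₂ φ hφ]
    exact hx.aeval_derivative_ne_zero (minpoly.aeval E _)
  obtain ⟨a, ha, ha₀⟩ := HenselianRing.is_henselian _ (hp.map φ) a₀ hroot hsimple
  refine ⟨a, ?_, fun q hq ↦ ?_⟩
  · rwa [← sub_eq_zero, ← map_sub, residue_eq_zero_iff]
  · obtain ⟨r, rfl⟩ := minpoly.dvd E _ hq
    rw [eval₂_mul, ← eval_map, ha.eq_zero, zero_mul]

theorem surjOn_residue_of_maximal [HenselianRing R (maximalIdeal R)]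
    [CharZero (ResidueField R)] {S : Subring R}
    (hS : Maximal (fun S : Subring R ↦ Set.InjOn (residue R) S) S) :
    Set.SurjOn (residue R) S Set.univ := by
  intro x _
  have hinj : Function.Injective ((residue R).comp S.subtype) :=
    Set.injOn_iff_injective.mp hS.prop
  have : IsDomain S := hinj.isDomain
  have hunit : ∀ s : nonZeroDivisors S, IsUnit ((s : S) : R) := fun s ↦
    (residue_ne_zero_iff_isUnit _).mp <|
      (map_ne_zero_iff _ hinj).mpr (nonZeroDivisors.coe_ne_zero s)
  let φ : FractionRing S →+* R := IsLocalization.lift (g := S.subtype) hunit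
  let _ : Algebra (FractionRing S) (ResidueField R) := ((residue R).comp φ).toAlgebra
  have : CharZero (FractionRing S) :=
    RingHom.charZero (algebraMap (FractionRing S) (ResidueField R))
  obtain ⟨a, rfl, ha⟩ : ∃ a : R, residue R a = x ∧
      ∀ q : (FractionRing S)[X], aeval x q = 0 → q.eval₂ φ a = 0 := by
    by_cases hx : IsAlgebraic (FractionRing S) x
    · exact exists_residue_eq_of_isSeparable φ rfl (minpoly.irreducible hx.isIntegral).separable
    · exact exists_residue_eq_of_transcendental φ hx
  have hS_le : S ≤ (eval₂RingHom φ a).range := fun s hs ↦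
    ⟨C (algebraMap S _ ⟨s, hs⟩), by
      rw [coe_eval₂RingHom, eval₂_C]
      exact IsLocalization.lift_eq hunit _⟩
  have ha_mem : a ∈ S :=
    hS.le_of_ge (injOn_residue_range_eval₂ φ rfl ha) hS_le ⟨X, eval₂_X _ _⟩
  exact ⟨a, ha_mem, rfl⟩

theorem exists_section_residue [HenselianRing R (maximalIdeal R)] [CharZero (ResidueField R)] :
    ∃ g : ResidueField R →+* R, (residue R).comp g = RingHom.id (ResidueField R) := by
  obtain ⟨S, hS⟩ := exists_maximal_injOn_residue (R := R)
  have hbij : Function.Bijective ((residue R).comp S.subtype) := by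
    refine ⟨Set.injOn_iff_injective.mp hS.prop, fun x ↦ ?_⟩
    obtain ⟨s, hs, rfl⟩ := surjOn_residue_of_maximal hS (Set.mem_univ x)
    exact ⟨⟨s, hs⟩, rfl⟩
  let e := RingEquiv.ofBijective _ hbij
  exact ⟨S.subtype.comp e.symm.toRingHom, RingHom.ext e.apply_symm_apply⟩

end IsLocalRing

/-- Let `R` be a local ring with maximal ideal `M` and residue field `k = R/M`,
complete with respect to the `M`-adic topology, whose residue field has
characteristic zero. Then the natural surjective ring map `R → k` admits a
ring-homomorphism section. -/
theorem stmt_1 (R : Type*) [CommRing R] [IsLocalRing R]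
    [IsAdicComplete (IsLocalRing.maximalIdeal R) R]
    [CharZero (IsLocalRing.ResidueField R)] :
    ∃ g : IsLocalRing.ResidueField R →+* R,
      (IsLocalRing.residue R).comp g = RingHom.id (IsLocalRing.ResidueField R) :=
  exists_section_residue
end

section
/- Let R be a commutative ring and S an R-algebra. Suppose S is the union of a directed family (S_i) of R-subalgebras such that each S_i is formally étale over R. Then S is formally étale over R. -/
/-!
A lift of `S → B ⧸ I` is determined by its restrictions to the `A i`, which exist and are
unique by étaleness of `A i`. Uniqueness makes these lifts compatible along inclusions, so by
directedness they glue to a lift on the union `S`; uniqueness on each `A i` likewise gives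
uniqueness on `S`.
-/

universe u

namespace Algebra

variable {R S : Type*} [CommRing R] [CommRing S] [Algebra R S] {ι : Type*}
  {A : ι → Subalgebra R S}

theorem FormallyUnramified.of_forall_exists_mem (hA : ∀ s : S, ∃ i, s ∈ A i)
    [∀ i, FormallyUnramified R (A i)] : FormallyUnramified R S := by
  rw [FormallyUnramified.iff_comp_injective]
  intro B _ _ I hI g₁ g₂ h
  ext s
  obtain ⟨i, hs⟩ := hA s
  have hrestrict : g₁.comp (A i).val = g₂.comp (A i).val :=
    FormallyUnramified.comp_injective I hI <| by
      rw [← AlgHom.comp_assoc, h, AlgHom.comp_assoc]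
  exact DFunLike.congr_fun hrestrict ⟨s, hs⟩

theorem FormallySmooth.of_directed_of_formallyEtale (hdir : Directed (· ≤ ·) A)
    (hA : ∀ s : S, ∃ i, s ∈ A i) [∀ i, FormallyEtale R (A i)] : FormallySmooth R S := by
  have : Nonempty ι := ⟨(hA 0).choose⟩
  have htop : (⊤ : Subalgebra R S) ≤ ⨆ i, A i := fun s _ ↦
    (hA s).elim fun i hs ↦ le_iSup A i hs
  refine FormallySmooth.of_comp_surjective fun B _ _ I hI f ↦ ?_
  choose g hg using fun i ↦ FormallySmooth.comp_surjective R (A i) I hI (f.comp (A i).val)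
  have hcompat : ∀ i j (h : A i ≤ A j), g i = (g j).comp (Subalgebra.inclusion h) :=
    fun i j h ↦ FormallyUnramified.comp_injective I hI <| by
      rw [hg i, ← AlgHom.comp_assoc, hg j]
      rfl
  refine ⟨(Subalgebra.iSupLift A hdir g hcompat ⊤ htop).comp
    Subalgebra.topEquiv.symm.toAlgHom, ?_⟩
  ext s
  obtain ⟨i, hs⟩ := hA s
  have hlift := DFunLike.congr_fun (hg i) ⟨s, hs⟩
  exact (congrArg (Ideal.Quotient.mkₐ R I)
    (Subalgebra.iSupLift_of_mem A (dir := hdir) (hf := hcompat) (hT := htop)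
      (Subalgebra.topEquiv.symm s) hs)).trans hlift

end Algebra

/-- Let `R` be a commutative ring and `S` an `R`-algebra which is the union of a
directed family of `R`-subalgebras, each of which is formally étale over `R`.
Then `S` is formally étale over `R`. -/
theorem stmt_12 (R S : Type u) [CommRing R] [CommRing S] [Algebra R S]
    (ι : Type*) (A : ι → Subalgebra R S) (hdir : Directed (· ≤ ·) A)
    (hunion : ∀ s : S, ∃ i, s ∈ A i)
    (hetale : ∀ i, Algebra.FormallyEtale R (A i)) :
    Algebra.FormallyEtale R S :=
  have := Algebra.FormallyUnramified.of_forall_exists_mem hunion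
  have := Algebra.FormallySmooth.of_directed_of_formallyEtale hdir hunion
  .of_formallyUnramified_and_formallySmooth
end

section
/- Let k be a field of characteristic zero, let A be a commutative ℚ-algebra, and let f : A → k be a surjective ℚ-algebra homomorphism whose kernel is a nilpotent ideal. Then f admits a ring-homomorphism section: there exists a ring homomorphism g : k → A with f ∘ g = id_k. -/
open Polynomial

lemma newton_aux {A : Type*} [CommRing A] (N : Ideal A) {n : ℕ} (hn : 1 ≤ n)
    (hN : N ^ n = ⊥) (Q : A[X]) (a₀ : A) (h₀ : Q.eval a₀ ∈ N)
    (hunit : ∀ a, a - a₀ ∈ N → IsUnit (Q.derivative.eval a)) :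
    ∃ a, a - a₀ ∈ N ∧ Q.eval a = 0 := by
  have key : ∀ j, 1 ≤ j → ∃ a, a - a₀ ∈ N ∧ Q.eval a ∈ N ^ j := by
    intro j hj
    induction j, hj using Nat.le_induction with
    | base => exact ⟨a₀, by simp, by simpa using h₀⟩
    | succ j hj ih =>
      obtain ⟨a, ha, hQa⟩ := ih
      have hu : IsUnit (Q.derivative.eval a) := hunit a ha
      set w : A := ↑hu.unit⁻¹ with hw
      have hmu : Q.derivative.eval a * w = 1 := hu.mul_val_inv
      set h : A := -(Q.eval a * w) with hh
      have hhmem : h ∈ N ^ j := neg_mem (Ideal.mul_mem_right _ _ hQa)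
      obtain ⟨c, hc⟩ := Q.binomExpansion a h
      have hdh : Q.derivative.eval a * h = -Q.eval a := by
        calc Q.derivative.eval a * h = -(Q.eval a * (Q.derivative.eval a * w)) := by
              rw [hh]; ring
          _ = -Q.eval a := by rw [hmu]; ring
      rw [hdh] at hc
      refine ⟨a + h, ?_, ?_⟩
      · have hN1 : h ∈ N := Ideal.pow_le_self (by omega) hhmem
        have := add_mem ha hN1
        simpa [add_sub_assoc, sub_add_eq_add_sub] using this
      · have h2 : Q.eval (a + h) = c * h ^ 2 := by rw [hc]; ring
        rw [h2]
        have : h ^ 2 ∈ N ^ (j + j) := by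
          rw [pow_add, sq]; exact Ideal.mul_mem_mul hhmem hhmem
        exact Ideal.pow_le_pow_right (by omega) (Ideal.mul_mem_left _ _ this)
  obtain ⟨a, ha, hQa⟩ := key n hn
  rw [hN] at hQa
  exact ⟨a, ha, by simpa using hQa⟩

/-- Let `k` be a field of characteristic zero, `A` a commutative `ℚ`-algebra, and
`f : A → k` a surjective `ℚ`-algebra homomorphism with nilpotent kernel. Then `f`
admits a ring-homomorphism section `g : k → A` with `f ∘ g = id`. -/
theorem stmt_15 (k : Type*) [Field k] [CharZero k]
    (A : Type*) [CommRing A] [Algebra ℚ A]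
    (f : A →ₐ[ℚ] k) (hf : Function.Surjective f)
    (hker : ∃ n : ℕ, 1 ≤ n ∧ (RingHom.ker (f : A →+* k)) ^ n = ⊥) :
    ∃ g : k →+* A, (f : A →+* k).comp g = RingHom.id k := by
  obtain ⟨n, hn1, hNn⟩ := hker
  set fr : A →+* k := (f : A →+* k) with hfr
  set N : Ideal A := RingHom.ker fr with hNdef
  have hfrs : Function.Surjective fr := hf
  -- any element with nonzero image is a unit
  have hunit : ∀ a : A, fr a ≠ 0 → IsUnit a := by
    intro a hfa
    obtain ⟨b, hb⟩ := hfrs (fr a)⁻¹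
    have hker' : a * b - 1 ∈ N := by
      rw [hNdef, RingHom.mem_ker, map_sub, map_mul, map_one, hb,
        mul_inv_cancel₀ hfa, sub_self]
    have hnil : IsNilpotent (a * b - 1) := by
      refine ⟨n, ?_⟩
      have := Ideal.pow_mem_pow hker' n
      rwa [hNn, Ideal.mem_bot] at this
    have hab : IsUnit (a * b) := by
      have := hnil.isUnit_add_one
      rwa [sub_add_cancel] at this
    exact isUnit_of_mul_isUnit_left hab
  -- Zorn's lemma
  set S : Set (Subring A) := {B | ∀ y ∈ B, fr y = 0 → y = 0} with hSdef
  have hbot : (⊥ : Subring A) ∈ S := by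
    intro y hy hfy
    obtain ⟨m, rfl⟩ := Subring.mem_bot.mp hy
    have h1 : ((m : ℤ) : k) = 0 := by simpa using hfy
    have h2 : (m : ℤ) = 0 := by exact_mod_cast h1
    simp [h2]
  obtain ⟨B, -, hBS, hBmax⟩ := zorn_le_nonempty₀ S (by
    intro c hcS hchain y hyc
    refine ⟨sSup c, ?_, fun z hz => le_sSup hz⟩
    intro t ht hft
    rw [Subring.mem_sSup_of_directedOn ⟨y, hyc⟩ hchain.directedOn] at ht
    obtain ⟨B, hBc, htB⟩ := ht
    exact hcS hBc t htB hft) ⊥ hbot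
  have hBinj : ∀ y ∈ B, fr y = 0 → y = 0 := hBS
  -- B is closed under inverses
  have hinv : ∀ b ∈ B, b ≠ 0 → ∃ u ∈ B, b * u = 1 := by
    intro b hb hb0
    have hfb : fr b ≠ 0 := fun h => hb0 (hBinj b hb h)
    have hub : IsUnit b := hunit b hfb
    set u : A := ↑hub.unit⁻¹ with hu
    have hbu : b * u = 1 := hub.mul_val_inv
    set W : Subring A := Subring.closure (insert u ↑B) with hW
    have hWprop : ∀ y ∈ W, ∃ m : ℕ, y * b ^ m ∈ B := by
      intro y hy
      induction hy using Subring.closure_induction with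
      | mem x hx =>
        rcases hx with rfl | hx
        · refine ⟨1, ?_⟩
          rw [pow_one, mul_comm, hbu]
          exact B.one_mem
        · exact ⟨0, by simpa using hx⟩
      | one => exact ⟨0, by simpa using B.one_mem⟩
      | zero => exact ⟨0, by simpa using B.zero_mem⟩
      | add x y _ _ hx hy =>
        obtain ⟨m, hm⟩ := hx; obtain ⟨l, hl⟩ := hy
        refine ⟨m + l, ?_⟩
        have : (x + y) * b ^ (m + l) = (x * b ^ m) * b ^ l + (y * b ^ l) * b ^ m := by
          ring
        rw [this]
        exact B.add_mem (B.mul_mem hm (B.pow_mem hb l)) (B.mul_mem hl (B.pow_mem hb m))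
      | neg x _ hx =>
        obtain ⟨m, hm⟩ := hx
        exact ⟨m, by simpa [neg_mul] using B.neg_mem hm⟩
      | mul x y _ _ hx hy =>
        obtain ⟨m, hm⟩ := hx; obtain ⟨l, hl⟩ := hy
        refine ⟨m + l, ?_⟩
        have : (x * y) * b ^ (m + l) = (x * b ^ m) * (y * b ^ l) := by ring
        rw [this]
        exact B.mul_mem hm hl
    have hWS : W ∈ S := by
      intro y hy hfy
      obtain ⟨m, hm⟩ := hWprop y hy
      have h0 : y * b ^ m = 0 := hBinj _ hm (by rw [map_mul, hfy, zero_mul])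
      have hbm : IsUnit (b ^ m) := hub.pow m
      obtain ⟨v, hv⟩ := hbm.exists_right_inv
      calc y = y * (b ^ m * v) := by rw [hv, mul_one]
        _ = (y * b ^ m) * v := by ring
        _ = 0 := by rw [h0, zero_mul]
    have hWB : W ≤ B := hBmax hWS (fun t ht => Subring.subset_closure (Set.mem_insert_of_mem _ ht))
    exact ⟨u, hWB (Subring.subset_closure (Set.mem_insert _ _)), hbu⟩
  -- the image subfield
  have hFinv : ∀ x ∈ (B.map fr : Subring k), x⁻¹ ∈ B.map fr := by
    intro x hx
    rcases eq_or_ne x 0 with rfl | hx0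
    · simpa using (B.map fr).zero_mem
    obtain ⟨b, hb, rfl⟩ := hx
    have hb0 : b ≠ 0 := by rintro rfl; simp at hx0
    obtain ⟨u, hu, hbu⟩ := hinv b hb hb0
    refine ⟨u, hu, ?_⟩
    have h1 : fr b * fr u = 1 := by rw [← map_mul, hbu, map_one]
    field_simp
    rw [mul_comm] at h1
    exact h1
  set F : Subfield k := { B.map fr with inv_mem' := hFinv } with hF
  have hmemF : ∀ b : ↥B, (fr.comp B.subtype) b ∈ F.toSubring := fun b => ⟨b, b.2, rfl⟩
  set ψ : ↥B →+* ↥F := (fr.comp B.subtype).codRestrict F.toSubring hmemF with hψ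
  have hψinj : Function.Injective ψ := by
    intro b b' h
    have h1 : fr (b : A) = fr (b' : A) := congrArg Subtype.val h
    have h2 : fr ((b : A) - (b' : A)) = 0 := by rw [map_sub, h1, sub_self]
    have h3 : (b : A) - (b' : A) = 0 := hBinj _ (B.sub_mem b.2 b'.2) h2
    exact Subtype.ext (sub_eq_zero.mp h3)
  have hψsurj : Function.Surjective ψ := by
    rintro ⟨x, b, hb, rfl⟩
    exact ⟨⟨b, hb⟩, rfl⟩
  set φ : ↥B ≃+* ↥F := RingEquiv.ofBijective ψ ⟨hψinj, hψsurj⟩ with hφ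
  have hcompψ : fr.comp B.subtype = (F.subtype).comp ψ := rfl
  -- commuting square for polynomial evaluation
  have hcomm : ∀ (P : Polynomial ↥B) (a : A),
      fr (Polynomial.eval₂ B.subtype a P) = Polynomial.aeval (fr a) (P.map ψ) := by
    intro P a
    rw [Polynomial.hom_eval₂, hcompψ, ← Polynomial.eval₂_map, Polynomial.aeval_def]
    rfl
  -- lifting polynomials back and forth
  have hback : ∀ (R : Polynomial ↥F),
      (R.map (φ.symm : ↥F →+* ↥B)).map ψ = R := by
    intro R
    have hψφ : (ψ : ↥B →+* ↥F) = (φ : ↥B →+* ↥F) := rfl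
    rw [hψφ, Polynomial.map_map]
    have : (φ : ↥B →+* ↥F).comp (φ.symm : ↥F →+* ↥B) = RingHom.id _ := by
      ext z; simp
    rw [this, Polynomial.map_id]
  have hforth : ∀ (P : Polynomial ↥B),
      (P.map ψ).map (φ.symm : ↥F →+* ↥B) = P := by
    intro P
    have hψφ : (ψ : ↥B →+* ↥F) = (φ : ↥B →+* ↥F) := rfl
    rw [hψφ, Polynomial.map_map]
    have : (φ.symm : ↥F →+* ↥B).comp (φ : ↥B →+* ↥F) = RingHom.id _ := by
      ext z; simp
    rw [this, Polynomial.map_id]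
  -- adjoining via maximality
  have hadj : ∀ a : A, ((Polynomial.eval₂RingHom B.subtype a).range ∈ S) → a ∈ B := by
    intro a hT
    have hBT : B ≤ (Polynomial.eval₂RingHom B.subtype a).range := by
      intro b hb
      exact ⟨Polynomial.C ⟨b, hb⟩, by simp⟩
    exact hBmax hT hBT ⟨Polynomial.X, by simp⟩
  -- main surjectivity
  have hsurjB : ∀ x : k, ∃ b ∈ B, fr b = x := by
    intro x
    obtain ⟨a₀, ha₀⟩ := hfrs x
    by_cases halg : IsAlgebraic ↥F x
    · have hint : IsIntegral ↥F x := halg.isIntegral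
      set q := minpoly ↥F x with hq
      have hqirr : Irreducible q := minpoly.irreducible hint
      have hqsep : q.Separable := hqirr.separable
      set Qb : Polynomial ↥B := q.map (φ.symm : ↥F →+* ↥B) with hQb
      set Q : A[X] := Qb.map B.subtype with hQdef
      have hQeval : ∀ a : A, Q.eval a = Polynomial.eval₂ B.subtype a Qb := by
        intro a; rw [hQdef, Polynomial.eval_map, Polynomial.eval₂_eq_eval_map]
      have hQmap : ∀ a : A, fr (Q.eval a) = Polynomial.aeval (fr a) q := by
        intro a
        rw [hQeval, hcomm, hQb, hback]
      have hQder : ∀ a : A, fr (Q.derivative.eval a)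
          = Polynomial.aeval (fr a) (Polynomial.derivative q) := by
        intro a
        have : Q.derivative = (Polynomial.derivative Qb).map B.subtype := by
          rw [hQdef, Polynomial.derivative_map]
        rw [this, ← Polynomial.eval₂_eq_eval_map, hcomm]
        congr 1
        rw [hQb, Polynomial.derivative_map, hback]
      have h₀ : Q.eval a₀ ∈ N := by
        rw [hNdef, RingHom.mem_ker, hQmap, ha₀, minpoly.aeval]
      have hder : ∀ a : A, a - a₀ ∈ N → IsUnit (Q.derivative.eval a) := by
        intro a ha
        have hfa : fr a = x := by
          have : fr a - fr a₀ = 0 := by rw [← map_sub]; exact ha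
          rw [← ha₀, ← sub_eq_zero]; exact this
        apply hunit
        rw [hQder, hfa]
        exact hqsep.aeval_derivative_ne_zero (minpoly.aeval _ _)
      obtain ⟨a, haN, hQa0⟩ := newton_aux N hn1 hNn Q a₀ h₀ hder
      have hfa : fr a = x := by
        have h5 : fr a - fr a₀ = 0 := by rw [← map_sub]; exact haN
        rw [← ha₀, ← sub_eq_zero]; exact h5
      have hT : (Polynomial.eval₂RingHom B.subtype a).range ∈ S := by
        rintro y ⟨P, rfl⟩ hfy
        have h0 : Polynomial.aeval x (P.map ψ) = 0 := by
          rw [← hfa, ← hcomm]; exact hfy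
        obtain ⟨s, hs⟩ := minpoly.dvd ↥F x h0
        have hP : (P : Polynomial ↥B) = Qb * s.map (φ.symm : ↥F →+* ↥B) := by
          have h6 := congrArg (Polynomial.map (φ.symm : ↥F →+* ↥B)) hs
          rw [Polynomial.map_mul, hforth] at h6
          rw [h6, hQb, hq]
        show Polynomial.eval₂ B.subtype a P = 0
        rw [hP, Polynomial.eval₂_mul, ← hQeval, hQa0, zero_mul]
      exact ⟨a, hadj a hT, hfa⟩
    · have hT : (Polynomial.eval₂RingHom B.subtype a₀).range ∈ S := by
        rintro y ⟨P, rfl⟩ hfy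
        have h0 : Polynomial.aeval x (P.map ψ) = 0 := by
          rw [← ha₀, ← hcomm]; exact hfy
        have hP0 : P.map ψ = 0 := by
          by_contra hne
          exact halg ⟨P.map ψ, hne, h0⟩
        have : (P : Polynomial ↥B) = 0 := by
          rw [← hforth P, hP0, Polynomial.map_zero]
        show Polynomial.eval₂ B.subtype a₀ P = 0
        rw [this, Polynomial.eval₂_zero]
      exact ⟨a₀, hadj a₀ hT, ha₀⟩
  -- conclude
  have hbij : Function.Bijective (fr.comp B.subtype) := by
    constructor
    · intro b b' h
      have h2 : fr ((b : A) - (b' : A)) = 0 := by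
        rw [map_sub, sub_eq_zero]; exact h
      have h3 : (b : A) - (b' : A) = 0 := hBinj _ (B.sub_mem b.2 b'.2) h2
      exact Subtype.ext (sub_eq_zero.mp h3)
    · intro x
      obtain ⟨b, hb, hfb⟩ := hsurjB x
      exact ⟨⟨b, hb⟩, hfb⟩
  set φk : ↥B ≃+* k := RingEquiv.ofBijective (fr.comp B.subtype) hbij with hφk
  refine ⟨B.subtype.comp (φk.symm : k →+* ↥B), ?_⟩
  ext x
  show fr (B.subtype (φk.symm x)) = x
  have : fr (B.subtype (φk.symm x)) = φk (φk.symm x) := rfl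
  rw [this, RingEquiv.apply_symm_apply]
end

section
/- Let F be a perfect field, k a field extension of F, A a commutative F-algebra, and f : A → k a surjective F-algebra homomorphism whose kernel is a nilpotent ideal. Then f admits a ring-homomorphism section: there exists a ring homomorphism g : k → A with f ∘ g = id_k. -/
/-!
Induction on the nilpotency index reduces to a square-zero kernel: if `J = (ker f) ^ (n - 1)` and
`s` is a section of `A ⧸ J → k`, the preimage of `s(k)` in `A` maps onto `k` with kernel inside
`J`, which squares to zero.

For a square-zero kernel every element outside `ker f` is a unit, and Zorn gives a subring `K`
maximal among those on which `f` is injective (and which contain all `p`-th powers in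
characteristic `p`); it is a field. If `t ∉ f(K)`, some lift `z` of `t` is a root of the minimal
polynomial of `t` over `K`: after a Newton step when `t` is separable, for free when `t` is
transcendental or when this polynomial is `X ^ p - z ^ p`. Then `f` is injective on `K[z]`,
contradicting maximality, so `f` maps `K` isomorphically onto `k`.
-/

open Polynomial Function

section Ring

variable {A : Type*} [CommRing A]

theorem Ideal.mul_eq_zero_of_sq_eq_bot {I : Ideal A} (hI : I ^ 2 = ⊥) {x y : A}
    (hx : x ∈ I) (hy : y ∈ I) : x * y = 0 := by
  have : x * y ∈ I ^ 2 := pow_two I ▸ Ideal.mul_mem_mul hx hy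
  rwa [hI, Ideal.mem_bot] at this

/-- A single Newton step `a₀ - p(a₀) / p'(a₀)`: the error term is quadratic in the correction. -/
theorem exists_isRoot_of_sq_eq_bot {I : Ideal A} (hI : I ^ 2 = ⊥) (p : A[X]) {a₀ : A}
    (hroot : p.eval a₀ ∈ I) (hunit : IsUnit (p.derivative.eval a₀)) :
    ∃ a, a - a₀ ∈ I ∧ p.IsRoot a := by
  obtain ⟨u, hu⟩ := hunit
  set h := -(p.eval a₀ * ↑u⁻¹) with h_def
  have hh : h ∈ I := I.neg_mem (I.mul_mem_right _ hroot)
  refine ⟨a₀ + h, by simpa using hh, ?_⟩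
  obtain ⟨q, hq⟩ := p.binomExpansion a₀ h
  rw [IsRoot, hq, ← hu, pow_two, Ideal.mul_eq_zero_of_sq_eq_bot hI hh hh, h_def, mul_neg,
    mul_left_comm, Units.mul_inv, mul_one]
  ring

theorem isLocalHom_of_ker_le_nilradical {S : Type*} [Ring S] (f : A →+* S)
    (hf : Surjective f) (hnil : RingHom.ker f ≤ nilradical A) : IsLocalHom f := by
  refine ⟨fun a ⟨v, hv⟩ => ?_⟩
  obtain ⟨b, hb⟩ := hf ↑v⁻¹
  have hab : 1 - a * b ∈ RingHom.ker f := by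
    rw [RingHom.mem_ker, map_sub, map_one, map_mul, hb, ← hv, Units.mul_inv, sub_self]
  exact isUnit_of_mul_isUnit_left (by simpa using (mem_nilradical.1 (hnil hab)).isUnit_one_sub)

theorem charP_of_ringHom_of_natCast_eq_zero {S : Type*} [Ring S] (f : A →+* S) (p : ℕ)
    [CharP S p] (hp : (p : A) = 0) : CharP A p where
  cast_eq_zero_iff n := by
    refine ⟨fun h => (CharP.cast_eq_zero_iff S p n).1 (by simpa using congrArg f h), ?_⟩
    rintro ⟨c, rfl⟩
    rw [Nat.cast_mul, hp, zero_mul]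

end Ring

theorem exists_section_of_bijective_comp {A B S : Type*} [Semiring A] [Semiring B] [Semiring S]
    (f : A →+* S) (ι : B →+* A) (h : Bijective (f.comp ι)) :
    ∃ g : S →+* A, f.comp g = RingHom.id S :=
  ⟨ι.comp (RingEquiv.ofBijective _ h).symm.toRingHom,
    RingHom.ext (RingEquiv.ofBijective _ h).apply_symm_apply⟩

section MaximalSubring

variable {A k : Type*} [CommRing A] [Field k] (f : A →+* k) {S₀ : Subring A}

theorem exists_maximal_subring_ker_trivial (h₀ : ∀ x ∈ S₀, f x = 0 → x = 0) :
    ∃ K : Subring A, Maximal (fun S : Subring A => S₀ ≤ S ∧ ∀ x ∈ S, f x = 0 → x = 0) K := by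
  obtain ⟨K, -, hK⟩ := zorn_le_nonempty₀ {S : Subring A | S₀ ≤ S ∧ ∀ x ∈ S, f x = 0 → x = 0}
    (fun c hc hchain S hS => ⟨sSup c, ⟨(hc hS).1.trans (le_sSup hS), fun x hx => by
      obtain ⟨T, hT, hxT⟩ := (Subring.mem_sSup_of_directedOn ⟨S, hS⟩ hchain.directedOn).1 hx
      exact (hc hT).2 x hxT⟩, fun _ => le_sSup⟩) S₀ ⟨le_rfl, h₀⟩
  exact ⟨K, hK⟩

variable {f}

/-- The image of the fraction field of `K` in `A` is again a subring on which `f` is injective,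
so by maximality it is `K` itself. -/
theorem isField_of_maximal_ker_trivial [IsLocalHom f] {K : Subring A}
    (hK : Maximal (fun S : Subring A => S₀ ≤ S ∧ ∀ x ∈ S, f x = 0 → x = 0) K) :
    IsField K := by
  have hinj : Injective (f.comp K.subtype) :=
    (injective_iff_map_eq_zero _).2 fun x hx => Subtype.ext (hK.1.2 x x.2 hx)
  have : IsDomain K := hinj.isDomain
  have hunit (y : nonZeroDivisors K) : IsUnit (K.subtype y) :=
    IsLocalHom.map_nonunit (f := f) _ <| isUnit_iff_ne_zero.2 fun h =>
      nonZeroDivisors.coe_ne_zero y (hinj (by simpa using h))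
  let φ : FractionRing K →+* A := IsLocalization.lift hunit
  have hφ (x : K) : φ (algebraMap K (FractionRing K) x) = x := IsLocalization.lift_eq hunit x
  have hKφ : K ≤ φ.range := fun x hx => ⟨_, hφ ⟨x, hx⟩⟩
  have hφK : φ.range ≤ K := hK.2 ⟨hK.1.1.trans hKφ, by
    rintro _ ⟨a, rfl⟩ h
    rw [(f.comp φ).injective (show f (φ a) = f (φ 0) by rw [h, map_zero, map_zero]), map_zero]⟩
    hKφ
  refine ⟨⟨0, 1, zero_ne_one⟩, mul_comm, fun {x} hx => ?_⟩
  have hx' : algebraMap K (FractionRing K) x ≠ 0 :=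
    (map_ne_zero_iff _ (IsFractionRing.injective K _)).2 hx
  refine ⟨⟨_, hφK ⟨(algebraMap K (FractionRing K) x)⁻¹, rfl⟩⟩, Subtype.ext ?_⟩
  simp only [Subring.coe_mul, Subring.coe_one, ← hφ x, ← map_mul, mul_inv_cancel₀ hx', map_one]

theorem mem_of_maximal_ker_trivial {K : Subring A}
    (hK : Maximal (fun S : Subring A => S₀ ≤ S ∧ ∀ x ∈ S, f x = 0 → x = 0) K) {z : A}
    (hz : ∀ q : K[X], f (q.eval₂ K.subtype z) = 0 → q.eval₂ K.subtype z = 0) : z ∈ K := by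
  have hKR : K ≤ (eval₂RingHom K.subtype z).range := fun x hx => ⟨C ⟨x, hx⟩, eval₂_C _ _⟩
  refine hK.2 ⟨hK.1.1.trans hKR, ?_⟩ hKR ⟨X, eval₂_X _ _⟩
  rintro _ ⟨q, rfl⟩
  exact hz q

end MaximalSubring

section FieldAlgebra

variable {K A k : Type*} [Field K] [CommRing A] [Field k] [Algebra K A] [Algebra K k]

theorem minpoly_eq_X_pow_sub_C_of_notMem_range {p : ℕ} (hp : p.Prime) [CharP k p] {t : k}
    (ht : t ∉ (algebraMap K k).range) {w : K} (hw : algebraMap K k w = t ^ p) :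
    minpoly K t = X ^ p - C w := by
  have : Fact p.Prime := ⟨hp⟩
  refine (minpoly.eq_of_irreducible_of_monic ?_ ?_ (monic_X_pow_sub_C w hp.ne_zero)).symm
  · refine X_pow_sub_C_irreducible_of_prime hp fun b hb => ht ⟨b, frobenius_inj k p ?_⟩
    rw [frobenius_def, frobenius_def, ← map_pow, hb, hw]
  · simp [hw]

variable (f : A →ₐ[K] k)

theorem aeval_eq_zero_of_aeval_minpoly_eq_zero {z : A} (hz : aeval z (minpoly K (f z)) = 0)
    {q : K[X]} (hq : aeval (f z) q = 0) : aeval z q = 0 := by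
  obtain ⟨r, rfl⟩ := minpoly.dvd K (f z) hq
  rw [map_mul, hz, zero_mul]

theorem exists_aeval_minpoly_eq_zero_of_isSeparable [IsLocalHom f] (hf : Surjective f)
    (h2 : RingHom.ker f ^ 2 = ⊥) {t : k} (ht : IsSeparable K t) :
    ∃ z, f z = t ∧ aeval z (minpoly K t) = 0 := by
  obtain ⟨z₀, rfl⟩ := hf t
  have hroot : ((minpoly K (f z₀)).map (algebraMap K A)).eval z₀ ∈ RingHom.ker f := by
    rw [eval_map_algebraMap, RingHom.mem_ker, ← aeval_algHom_apply, minpoly.aeval]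
  have hunit : IsUnit (((minpoly K (f z₀)).map (algebraMap K A)).derivative.eval z₀) := by
    rw [derivative_map, eval_map_algebraMap]
    refine IsLocalHom.map_nonunit (f := f) _ (isUnit_iff_ne_zero (a := f _).2 ?_)
    rw [← aeval_algHom_apply]
    exact ht.aeval_derivative_ne_zero (minpoly.aeval K _)
  obtain ⟨z, hz, hzroot⟩ := exists_isRoot_of_sq_eq_bot h2 _ hroot hunit
  refine ⟨z, by simpa [sub_eq_zero] using hz, ?_⟩
  rwa [IsRoot, eval_map_algebraMap] at hzroot

theorem exists_aeval_minpoly_eq_zero [IsLocalHom f] (hf : Surjective f)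
    (h2 : RingHom.ker f ^ 2 = ⊥) {p : ℕ} [CharP k p]
    (hpow : p ≠ 0 → ∀ a : A, a ^ p ∈ (algebraMap K A).range) {t : k}
    (ht : t ∉ (algebraMap K k).range) : ∃ z, f z = t ∧ aeval z (minpoly K t) = 0 := by
  rcases CharP.char_is_prime_or_zero k p with hp | rfl
  · obtain ⟨z, rfl⟩ := hf t
    obtain ⟨w, hw⟩ := hpow hp.ne_zero z
    refine ⟨z, rfl, ?_⟩
    rw [minpoly_eq_X_pow_sub_C_of_notMem_range hp ht (by rw [← f.commutes, hw, map_pow])]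
    simp [hw]
  · have : CharZero k := CharP.charP_to_charZero k
    have : CharZero K := (algebraMap K k).charZero
    by_cases hint : IsIntegral K t
    · exact exists_aeval_minpoly_eq_zero_of_isSeparable f hf h2
        (minpoly.irreducible hint).separable
    · obtain ⟨z, rfl⟩ := hf t
      exact ⟨z, rfl, by rw [minpoly.eq_zero hint, map_zero]⟩

end FieldAlgebra

section Section

variable {A k : Type*} [CommRing A] [Field k] {p : ℕ} [CharP k p]

theorem exists_section_of_subring (f : A →+* k) (hf : Surjective f)
    (h2 : RingHom.ker f ^ 2 = ⊥) (S₀ : Subring A) (h₀ : ∀ x ∈ S₀, f x = 0 → x = 0)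
    (hpow : p ≠ 0 → ∀ a : A, a ^ p ∈ S₀) : ∃ g : k →+* A, f.comp g = RingHom.id k := by
  have : IsLocalHom f := isLocalHom_of_ker_le_nilradical f hf fun x hx =>
    mem_nilradical.2 ⟨2, by simpa [h2] using Ideal.pow_mem_pow hx 2⟩
  obtain ⟨K, hK⟩ := exists_maximal_subring_ker_trivial f h₀
  let := (isField_of_maximal_ker_trivial hK).toField
  let : Algebra K k := (f.comp K.subtype).toAlgebra
  let fK : A →ₐ[K] k := { f with commutes' := fun _ => rfl }
  have : IsLocalHom fK := ⟨IsLocalHom.map_nonunit (f := f)⟩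
  refine exists_section_of_bijective_comp f K.subtype ⟨(f.comp K.subtype).injective, fun t => ?_⟩
  by_contra ht
  obtain ⟨z, rfl, hz⟩ := exists_aeval_minpoly_eq_zero fK hf h2
    (fun hp a => ⟨⟨a ^ p, hK.1.1 (hpow hp a)⟩, rfl⟩) (t := t) fun ⟨x, hx⟩ => ht ⟨x, hx⟩
  exact ht ⟨⟨z, mem_of_maximal_ker_trivial hK fun q hq =>
    aeval_eq_zero_of_aeval_minpoly_eq_zero fK hz ((aeval_algHom_apply fK z q).trans hq)⟩, rfl⟩

theorem exists_section_of_sq_ker_eq_bot (f : A →+* k) (hf : Surjective f) (hp : (p : A) = 0)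
    (h2 : RingHom.ker f ^ 2 = ⊥) : ∃ g : k →+* A, f.comp g = RingHom.id k := by
  rcases CharP.char_is_prime_or_zero k p with hprime | rfl
  · have : Fact p.Prime := ⟨hprime⟩
    have : CharP A p := charP_of_ringHom_of_natCast_eq_zero f p hp
    refine exists_section_of_subring f hf h2 (frobenius A p).range ?_ fun _ a => ⟨a, rfl⟩
    rintro _ ⟨a, rfl⟩ ha
    have hfa : f a = 0 := pow_eq_zero_iff hprime.ne_zero |>.1 <| (map_pow f a p).symm.trans ha
    have ha2 : a ^ 2 = 0 := by simpa [h2] using Ideal.pow_mem_pow (RingHom.mem_ker.2 hfa) 2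
    exact pow_eq_zero_of_le hprime.two_le ha2
  · have : CharZero k := CharP.charP_to_charZero k
    refine exists_section_of_subring f hf h2 ⊥ ?_ (absurd rfl)
    intro x hx hfx
    obtain ⟨n, rfl⟩ := Subring.mem_bot.1 hx
    rw [map_intCast, Int.cast_eq_zero] at hfx
    rw [hfx, Int.cast_zero]

theorem exists_section_of_section_quotient (f : A →+* k) (hp : (p : A) = 0) {J : Ideal A}
    (hJf : J ≤ RingHom.ker f) (hJ : J ^ 2 = ⊥) {s : k →+* A ⧸ J}
    (hs : (Ideal.Quotient.lift J f hJf).comp s = RingHom.id k) :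
    ∃ g : k →+* A, f.comp g = RingHom.id k := by
  have hs' {a : A} {x : k} (h : Ideal.Quotient.mk J a = s x) : f a = x :=
    (Ideal.Quotient.lift_mk J f hJf).symm.trans (h ▸ RingHom.congr_fun hs x)
  let A' := s.range.comap (Ideal.Quotient.mk J)
  have hsurj : Surjective (f.comp A'.subtype) := fun x => by
    obtain ⟨a, ha⟩ := Ideal.Quotient.mk_surjective (s x)
    exact ⟨⟨a, x, ha.symm⟩, hs' ha⟩
  have hker : RingHom.ker (f.comp A'.subtype) ≤ J.comap A'.subtype := by
    rintro ⟨a, x, hx⟩ ha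
    have hx0 : x = 0 := (hs' hx.symm).symm.trans ha
    simpa [hx0, Ideal.Quotient.eq_zero_iff_mem] using hx.symm
  have h2 : RingHom.ker (f.comp A'.subtype) ^ 2 = ⊥ := by
    refine le_bot_iff.1 <| (Ideal.pow_right_mono hker 2).trans <|
      (Ideal.le_comap_pow _ 2).trans ?_
    rw [hJ, ← RingHom.ker_eq_comap_bot, (RingHom.injective_iff_ker_eq_bot _).1
      A'.subtype_injective]
  obtain ⟨g, hg⟩ := exists_section_of_sq_ker_eq_bot _ hsurj (Subtype.ext (by simpa using hp)) h2
  exact ⟨A'.subtype.comp g, by rw [← RingHom.comp_assoc, hg]⟩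

theorem exists_section_of_ker_pow_eq_bot (n : ℕ) (f : A →+* k) (hf : Surjective f)
    (hp : (p : A) = 0) (hn : RingHom.ker f ^ n = ⊥) : ∃ g : k →+* A, f.comp g = RingHom.id k := by
  induction n generalizing A with
  | zero =>
    have := f.domain_nontrivial
    simp at hn
  | succ n ih =>
    rcases Nat.eq_zero_or_pos n with rfl | hn0
    · refine exists_section_of_bijective_comp f (RingHom.id A) ⟨?_, hf⟩
      exact (RingHom.injective_iff_ker_eq_bot f).2 (by simpa using hn)
    · let J := RingHom.ker f ^ n
      have hJ : J ^ 2 = ⊥ := le_bot_iff.1 <| hn ▸ by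
        rw [← pow_mul]; exact Ideal.pow_le_pow_right (by omega)
      obtain ⟨s, hs⟩ := ih (Ideal.Quotient.lift J f (Ideal.pow_le_self hn0.ne'))
        (Ideal.Quotient.lift_surjective_of_surjective _ _ hf)
        (by rw [← map_natCast (Ideal.Quotient.mk J), hp, map_zero])
        (by rw [Ideal.ker_quotient_lift, ← Ideal.map_pow, Ideal.map_quotient_self])
      exact exists_section_of_section_quotient f hp (Ideal.pow_le_self hn0.ne') hJ hs

end Section

theorem stmt_19_general (F : Type*) [Field F]
    (k : Type*) [Field k] [Algebra F k]
    (A : Type*) [CommRing A] [Algebra F A]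
    (f : A →ₐ[F] k) (hf : Function.Surjective f)
    (hker : ∃ n : ℕ, 1 ≤ n ∧ (RingHom.ker (f : A →+* k)) ^ n = ⊥) :
    ∃ g : k →+* A, (f : A →+* k).comp g = RingHom.id k := by
  obtain ⟨n, -, hn⟩ := hker
  have hchar : ((ringChar k : ℕ) : F) = 0 := (algebraMap F k).injective (by simp)
  exact exists_section_of_ker_pow_eq_bot n (f : A →+* k) hf
    (by simpa using congrArg (algebraMap F A) hchar) hn

/-- Let `F` be a perfect field, `k` a field extension of `F`, `A` a commutative
`F`-algebra, and `f : A → k` a surjective `F`-algebra homomorphism with nilpotent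
kernel. Then `f` admits a ring-homomorphism section `g : k → A` with `f ∘ g = id`. -/
theorem stmt_19 (F : Type*) [Field F] [PerfectField F]
    (k : Type*) [Field k] [Algebra F k]
    (A : Type*) [CommRing A] [Algebra F A]
    (f : A →ₐ[F] k) (hf : Function.Surjective f)
    (hker : ∃ n : ℕ, 1 ≤ n ∧ (RingHom.ker (f : A →+* k)) ^ n = ⊥) :
    ∃ g : k →+* A, (f : A →+* k).comp g = RingHom.id k :=
  stmt_19_general F k A f hf hker
end
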